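/- Let ε = 0, k ∈ {−1,0,1}, β > 0, and α, c ∈ ℝ with α² + 4kc > 0; let I be an open interval on which −k t² + α t + c > 0 and set b(t) = √(−k t² + α t + c). Then there exist t₀ ∈ ℝ and α' ≠ 0 such that b(t)² = α'(t − t₀) − k(t − t₀)² for all t ∈ I, and the energy density and pressure satisfy ρ(t) = p(t) = α'²/(4 (t − t₀)² (α' − k(t − t₀))²) > 0 on I. That is, after a time translation the metric takes the stiff-fluid form ds² = −dt² + dz² + (αt − kt²)[dr² + Σ(r,k)²dφ²] with ρ = p = α²/(4t²(α − kt)²). -/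

import Mathlib

/-
With `Q(t) = −k t² + α t + c` and `D = α² + 4kc`, the identity `Q'² + 4kQ = D` together with
`Q'' = −2k` gives `b'' = −D / (4 Q^{3/2})` for `b = √Q`, and hence `ρ = p = D / (4 Q²)`.
Completing the square with `α' = √D` (or `α' = α` when `k = 0`) puts `Q` in the form
`α'(t − t₀) − k(t − t₀)²`, so that `D / (4 Q²) = α'² / (4 (t − t₀)² (α' − k(t − t₀))²)`.
-/

/-- Orthonormal-tetrad Einstein tensor component `G₀₀` of the LRS metric
`ds² = −dt² + β²dz² + b(t)²[(dr − εr dz)² + Σ(r,k)²dφ²]`. -/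
noncomputable def G00 (k ε β : ℝ) (b : ℝ → ℝ) (t : ℝ) : ℝ :=
  (k + (deriv b t) ^ 2) / (b t) ^ 2 - 3 * ε / β ^ 2

/-- Component `G₀₃`. -/
noncomputable def G03 (k ε β : ℝ) (b : ℝ → ℝ) (t : ℝ) : ℝ :=
  -2 * ε * (deriv b t) / (β * b t)

/-- Component `G₁₁ = G₂₂`. -/
noncomputable def G22 (k ε β : ℝ) (b : ℝ → ℝ) (t : ℝ) : ℝ :=
  -(deriv (deriv b) t) / (b t) + ε / β ^ 2

/-- Component `G₃₃`. -/
noncomputable def G33 (k ε β : ℝ) (b : ℝ → ℝ) (t : ℝ) : ℝ :=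
  -2 * (deriv (deriv b) t) / (b t) - (k + (deriv b t) ^ 2) / (b t) ^ 2 + ε / β ^ 2

/-- Energy density `ρ = G₂₂ + G₀₀ − G₃₃`. -/
noncomputable def rho (k ε β : ℝ) (b : ℝ → ℝ) (t : ℝ) : ℝ :=
  G22 k ε β b t + G00 k ε β b t - G33 k ε β b t

/-- Pressure `p = G₂₂`. -/
noncomputable def pres (k ε β : ℝ) (b : ℝ → ℝ) (t : ℝ) : ℝ :=
  G22 k ε β b t

section SqrtQuadratic

variable (k α c : ℝ)

theorem hasDerivAt_quadratic (t : ℝ) :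
    HasDerivAt (fun s => -k * s ^ 2 + α * s + c) (α - 2 * k * t) t := by
  have h := (((hasDerivAt_pow 2 t).const_mul (-k)).add ((hasDerivAt_id t).const_mul α)).add_const c
  exact h.congr_deriv (by norm_num; ring)

theorem quadratic_deriv_sq_add (t : ℝ) :
    (α - 2 * k * t) ^ 2 + 4 * k * (-k * t ^ 2 + α * t + c) = α ^ 2 + 4 * k * c := by
  ring

variable {k α c}

theorem hasDerivAt_sqrt_quadratic {t : ℝ} (ht : 0 < -k * t ^ 2 + α * t + c) :
    HasDerivAt (fun s => √(-k * s ^ 2 + α * s + c))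
      ((α - 2 * k * t) / (2 * √(-k * t ^ 2 + α * t + c))) t :=
  (hasDerivAt_quadratic k α c t).sqrt ht.ne'

theorem deriv_sqrt_quadratic_eventuallyEq {t : ℝ} (ht : 0 < -k * t ^ 2 + α * t + c) :
    deriv (fun s => √(-k * s ^ 2 + α * s + c)) =ᶠ[nhds t]
      fun s => (α - 2 * k * s) / (2 * √(-k * s ^ 2 + α * s + c)) := by
  have hopen : IsOpen {s : ℝ | 0 < -k * s ^ 2 + α * s + c} :=
    isOpen_lt continuous_const (by fun_prop)
  filter_upwards [hopen.mem_nhds ht] with s hs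
  exact (hasDerivAt_sqrt_quadratic hs).deriv

theorem deriv_deriv_sqrt_quadratic {t : ℝ} (ht : 0 < -k * t ^ 2 + α * t + c) :
    deriv (deriv fun s => √(-k * s ^ 2 + α * s + c)) t =
      -(α ^ 2 + 4 * k * c) / (4 * (-k * t ^ 2 + α * t + c) * √(-k * t ^ 2 + α * t + c)) := by
  rw [(deriv_sqrt_quadratic_eventuallyEq ht).deriv_eq]
  have hS := Real.sqrt_pos.mpr ht
  have hnum : HasDerivAt (fun s => α - 2 * k * s) (-(2 * k)) t := by
    simpa using ((hasDerivAt_id t).const_mul (2 * k)).const_sub α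
  refine ((hnum.div ((hasDerivAt_sqrt_quadratic ht).const_mul 2) (by positivity)).deriv).trans ?_
  rw [← quadratic_deriv_sq_add k α c t]
  set S := √(-k * t ^ 2 + α * t + c)
  rw [show -k * t ^ 2 + α * t + c = S ^ 2 from (Real.sq_sqrt ht.le).symm]
  field_simp
  ring

theorem pres_sqrt_quadratic (β : ℝ) {t : ℝ} (ht : 0 < -k * t ^ 2 + α * t + c) :
    pres k 0 β (fun s => √(-k * s ^ 2 + α * s + c)) t =
      (α ^ 2 + 4 * k * c) / (4 * (-k * t ^ 2 + α * t + c) ^ 2) := by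
  simp only [pres, G22]
  rw [deriv_deriv_sqrt_quadratic ht]
  set S := √(-k * t ^ 2 + α * t + c)
  have hS : 0 < S := Real.sqrt_pos.mpr ht
  rw [show -k * t ^ 2 + α * t + c = S ^ 2 from (Real.sq_sqrt ht.le).symm]
  field_simp
  ring

theorem rho_sqrt_quadratic (β : ℝ) {t : ℝ} (ht : 0 < -k * t ^ 2 + α * t + c) :
    rho k 0 β (fun s => √(-k * s ^ 2 + α * s + c)) t =
      (α ^ 2 + 4 * k * c) / (4 * (-k * t ^ 2 + α * t + c) ^ 2) := by
  simp only [rho, G00, G22, G33]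
  rw [deriv_deriv_sqrt_quadratic ht, (hasDerivAt_sqrt_quadratic ht).deriv,
    ← quadratic_deriv_sq_add k α c t]
  set S := √(-k * t ^ 2 + α * t + c)
  have hS : 0 < S := Real.sqrt_pos.mpr ht
  rw [show -k * t ^ 2 + α * t + c = S ^ 2 from (Real.sq_sqrt ht.le).symm]
  field_simp
  ring

end SqrtQuadratic

theorem exists_quadratic_normal_form {k α c : ℝ} (hdisc : 0 < α ^ 2 + 4 * k * c) :
    ∃ t₀ α' : ℝ, α' ^ 2 = α ^ 2 + 4 * k * c ∧
      ∀ t, -k * t ^ 2 + α * t + c = α' * (t - t₀) - k * (t - t₀) ^ 2 := by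
  rcases eq_or_ne k 0 with rfl | hk
  · have hα : α ≠ 0 := by rintro rfl; norm_num at hdisc
    refine ⟨-c / α, α, by ring, fun t => ?_⟩
    field_simp
    ring
  · have hD := Real.sq_sqrt hdisc.le
    refine ⟨(α - √(α ^ 2 + 4 * k * c)) / (2 * k), √(α ^ 2 + 4 * k * c), hD, fun t => ?_⟩
    generalize √(α ^ 2 + 4 * k * c) = α' at hD ⊢
    field_simp
    linear_combination -hD

theorem eps_zero_stiff_fluid_normal_form_general (k β α c : ℝ)
    (hdisc : 0 < α ^ 2 + 4 * k * c)
    (I : Set ℝ)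
    (hpos : ∀ t ∈ I, 0 < -k * t ^ 2 + α * t + c) :
    ∃ t₀ α' : ℝ, α' ≠ 0 ∧
      (∀ t ∈ I,
        (Real.sqrt (-k * t ^ 2 + α * t + c)) ^ 2 =
          α' * (t - t₀) - k * (t - t₀) ^ 2) ∧
      (∀ t ∈ I,
        rho k 0 β (fun s => Real.sqrt (-k * s ^ 2 + α * s + c)) t =
            α' ^ 2 / (4 * (t - t₀) ^ 2 * (α' - k * (t - t₀)) ^ 2) ∧
        pres k 0 β (fun s => Real.sqrt (-k * s ^ 2 + α * s + c)) t =
            rho k 0 β (fun s => Real.sqrt (-k * s ^ 2 + α * s + c)) t ∧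
        0 < rho k 0 β (fun s => Real.sqrt (-k * s ^ 2 + α * s + c)) t) := by
  obtain ⟨t₀, α', hα'_sq, hQ⟩ := exists_quadratic_normal_form hdisc
  have hα' : α' ≠ 0 := by
    rintro rfl
    rw [← hα'_sq] at hdisc
    norm_num at hdisc
  refine ⟨t₀, α', hα', fun t ht => by rw [Real.sq_sqrt (hpos t ht).le, hQ], fun t ht => ?_⟩
  have hρ := rho_sqrt_quadratic β (hpos t ht)
  refine ⟨?_, by rw [pres_sqrt_quadratic β (hpos t ht), hρ], ?_⟩
  · rw [hρ, ← hα'_sq, hQ]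
    ring
  · rw [hρ]
    have := hpos t ht
    positivity

/-- For `ε = 0`, `k ∈ {−1,0,1}`, `β > 0`, constants `α, c` with
`α² + 4kc > 0`, and `b(t) = √(−k t² + α t + c)` on an open interval where the radicand is
positive, after a time translation `t ↦ t − t₀` the metric function takes the form
`b² = α'(t−t₀) − k(t−t₀)²` with `α' ≠ 0`, and
`ρ = p = α'²/(4(t−t₀)²(α'−k(t−t₀))²) > 0` on `I`: the stiff-fluid solution
`ds² = −dt² + dz² + (αt − kt²)[dr² + Σ(r,k)²dφ²]` with `ρ = p = α²/(4t²(α−kt)²)`. -/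
theorem eps_zero_stiff_fluid_normal_form (k β α c : ℝ)
    (hk : k = -1 ∨ k = 0 ∨ k = 1) (hβ : 0 < β) (hdisc : 0 < α ^ 2 + 4 * k * c)
    (I : Set ℝ) (hI : ∃ x y : ℝ, I = Set.Ioo x y)
    (hpos : ∀ t ∈ I, 0 < -k * t ^ 2 + α * t + c) :
    ∃ t₀ α' : ℝ, α' ≠ 0 ∧
      (∀ t ∈ I,
        (Real.sqrt (-k * t ^ 2 + α * t + c)) ^ 2 =
          α' * (t - t₀) - k * (t - t₀) ^ 2) ∧
      (∀ t ∈ I,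
        rho k 0 β (fun s => Real.sqrt (-k * s ^ 2 + α * s + c)) t =
            α' ^ 2 / (4 * (t - t₀) ^ 2 * (α' - k * (t - t₀)) ^ 2) ∧
        pres k 0 β (fun s => Real.sqrt (-k * s ^ 2 + α * s + c)) t =
            rho k 0 β (fun s => Real.sqrt (-k * s ^ 2 + α * s + c)) t ∧
        0 < rho k 0 β (fun s => Real.sqrt (-k * s ^ 2 + α * s + c)) t) :=
  eps_zero_stiff_fluid_normal_form_general k β α c hdisc I hpos
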